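/- arXiv:2010.10414 — 6 statements merged into one kernel-verified Lean document; each statement's English description precedes it below -/
import Mathlib

section
/- Let m and n be nonzero coprime integers and let BS(m,n) = ⟨x, t ∣ t⁻¹ xᵐ t = xⁿ⟩ be the Baumslag–Solitar group. Let L denote the normal closure of x in BS(m,n). Then the abelianization of L (equivalently, the first homology group H₁(L; ℤ)) is isomorphic, as an abelian group, to ℤ[1/(mn)], i.e. to the additive subgroup {q ∈ ℚ : q·(mn)^k ∈ ℤ for some k ∈ ℕ} of the rationals. -/
/-- The single defining relator of the Baumslag–Solitar group `BS(m,n)`: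
`t⁻¹ xᵐ t (xⁿ)⁻¹`, where `x` and `t` are the two generators. -/
def bsRel (m n : ℤ) : Set (FreeGroup Bool) :=
  {(FreeGroup.of false)⁻¹ * (FreeGroup.of true) ^ m * FreeGroup.of false *
    ((FreeGroup.of true) ^ n)⁻¹}

/-- The Baumslag–Solitar group `BS(m,n) = ⟨x, t ∣ t⁻¹ xᵐ t = xⁿ⟩`. -/
abbrev BS (m n : ℤ) : Type := PresentedGroup (bsRel m n)

/-- The generator `x` of `BS(m,n)`. -/
def BS.x (m n : ℤ) : BS m n := PresentedGroup.of true

/-- The generator `t` of `BS(m,n)`. -/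
def BS.t (m n : ℤ) : BS m n := PresentedGroup.of false

/-- The additive subgroup `ℤ[1/(mn)]` of `ℚ`: rationals `q` such that `q·(mn)^k ∈ ℤ`
for some natural number `k`. -/
def zOneOver (m n : ℤ) : AddSubgroup ℚ where
  carrier := {q : ℚ | ∃ (k : ℕ) (z : ℤ), q * ((m * n : ℤ) : ℚ) ^ k = (z : ℚ)}
  zero_mem' := ⟨0, 0, by simp⟩
  add_mem' := by
    rintro a b ⟨k, z, h⟩ ⟨k', z', h'⟩
    refine ⟨k + k', z * (m * n) ^ k' + z' * (m * n) ^ k, ?_⟩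
    push_cast
    push_cast at h h'
    linear_combination ((m : ℚ) * n) ^ k' * h + ((m : ℚ) * n) ^ k * h'
  neg_mem' := by
    rintro a ⟨k, z, h⟩
    exact ⟨k, -z, by push_cast; push_cast at h; linarith⟩

/-!
Every element of `BS(m,n)` is `l tᵏ` with `l` in the normal closure `L` of `x`, so `L^ab` is
generated by the classes of `x_k = tᵏ x t⁻ᵏ`; these satisfy `x_kᵐ = x_{k+1}ⁿ`, which gives a
surjection `ℤ[T,T⁻¹] → L^ab`, `Tᵏ ↦ x_k`, killing the ideal `(nT - m)`. In the affine action
`x : q ↦ q + 1`, `t : q ↦ (m/n) q` of `BS(m,n)` on `ℚ`, the subgroup `L` acts by translations, and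
the translation length `L^ab → ℚ` pulls back to evaluation at `m/n`. Since `m` and `n` are coprime,
Gauss's lemma shows that the kernel of this evaluation is exactly `(nT - m)`; hence
`L^ab ≅ ℤ[T,T⁻¹]/(nT - m) ≅ ℤ[m/n, n/m] = ℤ[1/(mn)]`.
-/

section

open Polynomial

theorem Polynomial.C_mul_X_sub_C_dvd_of_eval₂_eq_zero {m n : ℤ} (hco : IsCoprime m n) (hn : n ≠ 0)
    {μ : ℚ} (hμ : (n : ℚ) * μ = m) {p : ℤ[X]} (hp : p.eval₂ (Int.castRingHom ℚ) μ = 0) :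
    C n * X - C m ∣ p := by
  have hprim : (C n * X - C m).IsPrimitive := by
    intro r hr
    have hcoeff := fun i => (Polynomial.C_dvd_iff_dvd_coeff _ _).1 hr i
    apply hco.isUnit_of_dvd'
    · simpa using hcoeff 0
    · simpa only [coeff_sub, coeff_C_mul_X, coeff_C, if_true, one_ne_zero, if_false, sub_zero]
        using hcoeff 1
  have hmap : (C n * X - C m).map (Int.castRingHom ℚ) = C (n : ℚ) * (X - C μ) := by
    rw [Polynomial.map_sub, Polynomial.map_mul, Polynomial.map_C, Polynomial.map_C, map_X,
      eq_intCast, eq_intCast, ← hμ, C_mul]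
    ring
  rw [IsPrimitive.Int.dvd_iff_map_cast_dvd_map_cast _ _ hprim, hmap,
    (isUnit_C.2 (Int.cast_ne_zero.2 hn).isUnit).mul_left_dvd, dvd_iff_isRoot, IsRoot, eval_map]
  exact hp

end

open LaurentPolynomial Subgroup

theorem LaurentPolynomial.ker_eval₂_eq_span {m n : ℤ} (hco : IsCoprime m n) (hn : n ≠ 0) {μ : ℚˣ}
    (hμ : (n : ℚ) * μ = m) :
    RingHom.ker (eval₂ (Int.castRingHom ℚ) μ) = Ideal.span {C n * T 1 - C m} := by
  apply le_antisymm
  · intro f hf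
    obtain ⟨N, p, hp⟩ := exists_T_pow f
    have hroot : p.eval₂ (Int.castRingHom ℚ) μ = 0 := by
      rw [← eval₂_toLaurent, hp, map_mul, RingHom.mem_ker.1 hf, zero_mul]
    obtain ⟨q, rfl⟩ := Polynomial.C_mul_X_sub_C_dvd_of_eval₂_eq_zero hco hn hμ hroot
    have hf : f = (C n * T 1 - C m) * (Polynomial.toLaurent q * T (-N)) := by
      rw [← mul_assoc, ← Polynomial.toLaurent_X, ← Polynomial.toLaurent_C, ← Polynomial.toLaurent_C,
        ← map_mul, ← map_sub, ← map_mul, hp, mul_assoc, ← T_add, add_neg_cancel, T_zero, mul_one]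
    rw [hf]
    exact Ideal.mul_mem_right _ _ (Ideal.mem_span_singleton_self _)
  · rw [Ideal.span_le, Set.singleton_subset_iff, SetLike.mem_coe, RingHom.mem_ker]
    simp [hμ]

theorem zpow_mem_zOneOver {m n : ℤ} {μ : ℚˣ} (hμ : (n : ℚ) * μ = m) (k : ℤ) :
    ((μ ^ k : ℚˣ) : ℚ) ∈ zOneOver m n := by
  obtain ⟨j, rfl | rfl⟩ := Int.eq_nat_or_neg k
  · refine ⟨j, m ^ (2 * j), ?_⟩
    rw [Units.val_zpow_eq_zpow_val, zpow_natCast]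
    push_cast
    rw [← hμ]
    ring
  · refine ⟨j, n ^ (2 * j), ?_⟩
    rw [Units.val_zpow_eq_zpow_val, zpow_neg, zpow_natCast]
    push_cast
    rw [← hμ]
    field_simp
    ring

theorem LaurentPolynomial.range_eval₂_eq_zOneOver {m n : ℤ} (hco : IsCoprime m n) (hn : n ≠ 0)
    {μ : ℚˣ} (hμ : (n : ℚ) * μ = m) :
    (eval₂ (Int.castRingHom ℚ) μ : ℤ[T;T⁻¹] →+ ℚ).range = zOneOver m n := by
  apply le_antisymm
  · rintro _ ⟨f, rfl⟩
    induction f using LaurentPolynomial.induction_on' with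
    | add p q hp hq => simpa using add_mem hp hq
    | C_mul_T k a => simpa [← zsmul_eq_mul] using zsmul_mem (zpow_mem_zOneOver hμ k) a
  · rintro q ⟨k, z, hz⟩
    -- `q = z / (mn)ᵏ = z a μᵏ + z b μ⁻ᵏ`, where `a m²ᵏ + b n²ᵏ = 1`
    obtain ⟨a, b, hab⟩ := hco.pow (m := 2 * k) (n := 2 * k)
    refine ⟨C (z * a) * T k + C (z * b) * T (-k), ?_⟩
    have hnq : (n : ℚ) ≠ 0 := Int.cast_ne_zero.2 hn
    have hmq : (m : ℚ) ≠ 0 := by rw [← hμ]; exact mul_ne_zero hnq μ.ne_zero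
    have hμ' : (μ : ℚ) = m / n := by rw [← hμ]; field_simp
    have hab' : (a : ℚ) * (m : ℚ) ^ (2 * k) + (b : ℚ) * (n : ℚ) ^ (2 * k) = 1 := by
      exact_mod_cast hab
    push_cast at hz
    rw [AddMonoidHom.coe_coe, map_add, eval₂_C_mul_T, eval₂_C_mul_T, Units.val_zpow_eq_zpow_val,
      Units.val_zpow_eq_zpow_val, zpow_neg, zpow_natCast, hμ', eq_intCast, eq_intCast]
    rw [div_pow, inv_div]
    field_simp
    push_cast
    linear_combination (z : ℚ) * hab' - hz

section ConjugatesByPowers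

variable {G : Type*} [Group G] (x t : G)

def conjByZPow (k : ℤ) : normalClosure ({x} : Set G) :=
  ⟨t ^ k * x * (t ^ k)⁻¹,
    normalClosure_normal.conj_mem x (subset_normalClosure (Set.mem_singleton x)) (t ^ k)⟩

noncomputable def laurentToAbelianization :
    ℤ[T;T⁻¹] →+ Additive (Abelianization (normalClosure ({x} : Set G))) :=
  (Finsupp.liftAddHom fun k => zmultiplesHom _ (.ofMul (.of (conjByZPow x t k)))).comp
    AddMonoidAlgebra.coeffAddEquiv.toAddMonoidHom

theorem laurentToAbelianization_C_mul_T (a k : ℤ) :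
    laurentToAbelianization x t (C a * T k) = a • .ofMul (.of (conjByZPow x t k)) := by
  rw [← single_eq_C_mul_T]
  exact Finsupp.liftAddHom_apply_single _ _ _

theorem ofMul_of_mem_range_laurentToAbelianization
    (hgen : normalClosure ({x} : Set G) ⊔ zpowers t = ⊤) {g : G}
    (hg : g ∈ normalClosure ({x} : Set G)) :
    Additive.ofMul (Abelianization.of ⟨g, hg⟩) ∈ (laurentToAbelianization x t).range := by
  induction hg using Subgroup.closure_induction with
  | mem g hg =>
    obtain ⟨y, hy, hconj⟩ := Group.mem_conjugatesOfSet_iff.1 hg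
    obtain ⟨c, rfl⟩ := isConj_iff.1 (Set.mem_singleton_iff.1 hy ▸ hconj)
    obtain ⟨l, hl, _, ⟨k, rfl⟩, rfl⟩ := mem_sup_of_normal_left.1 (hgen ▸ mem_top c)
    beta_reduce at hg ⊢
    have hconj_eq : (⟨l * t ^ k * x * (l * t ^ k)⁻¹, conjugatesOfSet_subset_normalClosure hg⟩ :
        normalClosure ({x} : Set G)) = ⟨l, hl⟩ * conjByZPow x t k * ⟨l, hl⟩⁻¹ := by
      ext
      simp only [conjByZPow, Subgroup.coe_mul, Subgroup.coe_inv]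
      group
    refine ⟨C 1 * T k, ?_⟩
    rw [laurentToAbelianization_C_mul_T, one_zsmul, hconj_eq]
    congr 1
    rw [map_mul, map_mul, map_inv, mul_inv_cancel_comm]
  | one => exact zero_mem _
  | mul g h _ _ hg hh => exact add_mem hg hh
  | inv g _ hg => exact neg_mem hg

theorem laurentToAbelianization_surjective
    (hgen : normalClosure ({x} : Set G) ⊔ zpowers t = ⊤) :
    Function.Surjective (laurentToAbelianization x t) := by
  intro a
  obtain ⟨⟨g, hg⟩, rfl⟩ := QuotientGroup.mk_surjective (Additive.toMul a)
  exact ofMul_of_mem_range_laurentToAbelianization x t hgen hg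

theorem conjByZPow_zpow_eq {m n : ℤ} (hrel : t⁻¹ * x ^ m * t = x ^ n) (k : ℤ) :
    conjByZPow x t k ^ m = conjByZPow x t (k + 1) ^ n := by
  ext
  rw [SubgroupClass.coe_zpow, SubgroupClass.coe_zpow, conjByZPow, conjByZPow, conj_zpow, conj_zpow,
    ← hrel]
  group

theorem laurentToAbelianization_mul_eq_zero {m n : ℤ} (hrel : t⁻¹ * x ^ m * t = x ^ n)
    (f : ℤ[T;T⁻¹]) : laurentToAbelianization x t (f * (C n * T 1 - C m)) = 0 := by
  induction f using LaurentPolynomial.induction_on' with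
  | add p q hp hq => rw [add_mul, map_add, hp, hq, add_zero]
  | C_mul_T k a =>
    have hmul : C a * T k * (C n * T 1 - C m) = C (a * n) * T (k + 1) - C (a * m) * T k := by
      rw [T_add, map_mul, map_mul]
      ring
    have hrel' : m • Additive.ofMul (Abelianization.of (conjByZPow x t k)) =
        n • Additive.ofMul (Abelianization.of (conjByZPow x t (k + 1))) := by
      rw [← ofMul_zpow, ← ofMul_zpow, ← map_zpow, ← map_zpow, conjByZPow_zpow_eq x t hrel]
    rw [hmul, map_sub, laurentToAbelianization_C_mul_T, laurentToAbelianization_C_mul_T, mul_zsmul,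
      mul_zsmul, ← hrel', sub_self]

end ConjugatesByPowers

section Translations

variable (R : Type*)

abbrev translations [AddGroup R] : Subgroup (Equiv.Perm R) :=
  (MulAction.toPermHom (Multiplicative R) R).range

variable {R}

@[simp]
theorem Multiplicative.smul_eq_toAdd_add [AddMonoid R] (a : Multiplicative R) (q : R) :
    a • q = a.toAdd + q :=
  rfl

theorem toPermHom_multiplicative_injective [AddGroup R] :
    Function.Injective (MulAction.toPermHom (Multiplicative R) R) := fun a b h => by
  simpa using DFunLike.congr_fun h 0

noncomputable def translationsEquiv [AddGroup R] : Multiplicative R ≃* translations R :=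
  MonoidHom.ofInjective toPermHom_multiplicative_injective

theorem translationsEquiv_symm_apply [AddGroup R] (f : translations R) :
    (translationsEquiv.symm f : Multiplicative R) = .ofAdd ((f : Equiv.Perm R) 0) := by
  obtain ⟨a, ha⟩ := f.2
  rw [MulEquiv.symm_apply_eq]
  ext q
  rw [translationsEquiv, MonoidHom.ofInjective_apply, ← ha]
  simp

theorem range_toPermHom_units_le_normalizer_translations [Ring R] :
    (MulAction.toPermHom Rˣ R).range ≤ normalizer (translations R : Set (Equiv.Perm R)) := by
  rw [le_normalizer_iff]
  rintro _ ⟨u, rfl⟩ _ ⟨a, rfl⟩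
  refine ⟨.ofAdd ((u : R) * a.toAdd), ?_⟩
  ext q
  simp [Units.smul_def]

end Translations

namespace BS

variable {m n : ℤ}

theorem t_inv_mul_x_zpow_mul_t : (t m n)⁻¹ * x m n ^ m * t m n = x m n ^ n := by
  rw [← mul_inv_eq_one]
  exact (QuotientGroup.eq_one_iff _).2 (subset_normalClosure rfl)

theorem normalClosure_x_sup_zpowers_t :
    normalClosure {x m n} ⊔ zpowers (t m n) = ⊤ := by
  rw [eq_top_iff, ← PresentedGroup.closure_range_of, closure_le]
  rintro _ ⟨_ | _, rfl⟩
  · exact mem_sup_right (mem_zpowers _)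
  · exact mem_sup_left (subset_normalClosure rfl)

def affineGen (μ : ℚˣ) : Bool → Equiv.Perm ℚ
  | true => MulAction.toPermHom (Multiplicative ℚ) ℚ (.ofAdd 1)
  | false => MulAction.toPermHom ℚˣ ℚ μ

theorem lift_affineGen_rel {μ : ℚˣ} (hμ : (n : ℚ) * μ = m) :
    ∀ r ∈ bsRel m n, FreeGroup.lift (affineGen μ) r = 1 := by
  rintro _ rfl
  simp only [map_mul, map_inv, map_zpow, FreeGroup.lift_apply_of, affineGen]
  rw [← map_zpow (MulAction.toPermHom _ ℚ), ← map_zpow (MulAction.toPermHom _ ℚ)]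
  ext q
  simp [Units.smul_def]
  rw [← hμ]
  field_simp
  ring

noncomputable def affineRep (μ : ℚˣ) (hμ : (n : ℚ) * μ = m) : BS m n →* Equiv.Perm ℚ :=
  PresentedGroup.toGroup (lift_affineGen_rel hμ)

section AffineRepresentation

variable {μ : ℚˣ} (hμ : (n : ℚ) * μ = m)

theorem affineRep_x :
    affineRep μ hμ (x m n) = MulAction.toPermHom (Multiplicative ℚ) ℚ (.ofAdd 1) :=
  PresentedGroup.toGroup.of _

theorem affineRep_t : affineRep μ hμ (t m n) = MulAction.toPermHom _ ℚ μ :=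
  PresentedGroup.toGroup.of _

theorem normalClosure_x_le_comap_translations :
    normalClosure {x m n} ≤ (translations ℚ).comap (affineRep μ hμ) := by
  -- the images of both generators normalize the translations
  have hnormal : ((translations ℚ).comap (affineRep μ hμ)).Normal := by
    rw [← normalizer_eq_top_iff, eq_top_iff]
    refine le_trans ?_ (le_normalizer_comap _)
    rw [← PresentedGroup.closure_range_of, closure_le]
    rintro _ ⟨_ | _, rfl⟩
    · exact range_toPermHom_units_le_normalizer_translations ⟨μ, (affineRep_t hμ).symm⟩
    · exact le_normalizer ⟨_, (affineRep_x hμ).symm⟩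
  exact normalClosure_le_normal (Set.singleton_subset_iff.2 ⟨_, (affineRep_x hμ).symm⟩)

noncomputable def translationLength (μ : ℚˣ) (hμ : (n : ℚ) * μ = m) :
    normalClosure {x m n} →* Multiplicative ℚ :=
  translationsEquiv.symm.toMonoidHom.comp <|
    ((affineRep μ hμ).comp (normalClosure {x m n}).subtype).codRestrict (translations ℚ)
      fun g => normalClosure_x_le_comap_translations hμ g.2

theorem translationLength_apply (g : normalClosure {x m n}) :
    translationLength μ hμ g = .ofAdd (affineRep μ hμ g 0) :=
  translationsEquiv_symm_apply _

theorem translationLength_conjByZPow (k : ℤ) :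
    translationLength μ hμ (conjByZPow (x m n) (t m n) k) = .ofAdd ((μ ^ k : ℚˣ) : ℚ) := by
  rw [translationLength_apply, conjByZPow]
  simp only [map_mul, map_inv, map_zpow, affineRep_x, affineRep_t]
  rw [← map_zpow (MulAction.toPermHom ℚˣ ℚ)]
  simp [Units.smul_def]

theorem toAdditiveLeft_lift_translationLength_laurentToAbelianization (f : ℤ[T;T⁻¹]) :
    (Abelianization.lift (translationLength μ hμ)).toAdditiveLeft
      (laurentToAbelianization (x m n) (t m n) f) = eval₂ (Int.castRingHom ℚ) μ f := by
  induction f using LaurentPolynomial.induction_on' with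
  | add p q hp hq => rw [map_add, map_add, hp, hq, map_add]
  | C_mul_T k a =>
    rw [laurentToAbelianization_C_mul_T, map_zsmul, eval₂_C_mul_T, eq_intCast, zsmul_eq_mul]
    congr 1
    exact congrArg Multiplicative.toAdd (translationLength_conjByZPow hμ k)

end AffineRepresentation

theorem ker_laurentToAbelianization (hco : IsCoprime m n) (hn : n ≠ 0) {μ : ℚˣ}
    (hμ : (n : ℚ) * μ = m) :
    (laurentToAbelianization (x m n) (t m n)).ker =
      (eval₂ (Int.castRingHom ℚ) μ : ℤ[T;T⁻¹] →+ ℚ).ker := by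
  ext f
  constructor
  · intro hf
    rw [AddMonoidHom.mem_ker, AddMonoidHom.coe_coe,
      ← toAdditiveLeft_lift_translationLength_laurentToAbelianization hμ, hf, map_zero]
  · intro hf
    have hf' : f ∈ RingHom.ker (eval₂ (Int.castRingHom ℚ) μ) := hf
    rw [ker_eval₂_eq_span hco hn hμ] at hf'
    obtain ⟨g, rfl⟩ := Ideal.mem_span_singleton'.1 hf'
    exact laurentToAbelianization_mul_eq_zero _ _ t_inv_mul_x_zpow_mul_t g

end BS

theorem abelianization_normalClosure_x_iso
    (m n : ℤ) (hm : m ≠ 0) (hn : n ≠ 0) (hco : IsCoprime m n) :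
    Nonempty (Additive
        (Abelianization (Subgroup.normalClosure ({BS.x m n} : Set (BS m n)))) ≃+
      zOneOver m n) := by
  have hnq : (n : ℚ) ≠ 0 := Int.cast_ne_zero.2 hn
  let μ : ℚˣ := Units.mk0 ((m : ℚ) / n) (div_ne_zero (Int.cast_ne_zero.2 hm) hnq)
  have hμ : (n : ℚ) * μ = m := mul_div_cancel₀ _ hnq
  have hsurj := laurentToAbelianization_surjective (BS.x m n) (BS.t m n)
    BS.normalClosure_x_sup_zpowers_t
  exact ⟨(QuotientAddGroup.quotientKerEquivOfSurjective _ hsurj).symm.trans <|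
    (QuotientAddGroup.quotientAddEquivOfEq (BS.ker_laurentToAbelianization hco hn hμ)).trans <|
      (QuotientAddGroup.quotientKerEquivRange _).trans <|
        AddEquiv.addSubgroupCongr (range_eval₂_eq_zOneOver hco hn hμ)⟩
end

section
/- Let m and n be nonzero integers and let BS(m,n) = ⟨x, t ∣ t⁻¹ xᵐ t = xⁿ⟩. Then for every element g of the normal closure of x in BS(m,n) there exists a positive integer q (one may take q = (|m|·|n|)^S for suitable S depending on g) such that g commutes with x^q, i.e. g x^q g⁻¹ = x^q. -/
namespace Subgroup

variable {G : Type*} [Group G]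

def virtualCentralizer (a : G) : Subgroup G where
  carrier := {g | ∃ q : ℕ, 0 < q ∧ Commute g (a ^ q)}
  one_mem' := ⟨1, one_pos, Commute.one_left _⟩
  mul_mem' := by
    rintro g h ⟨q, hq, hg⟩ ⟨q', hq', hh⟩
    refine ⟨q * q', Nat.mul_pos hq hq', ?_⟩
    rw [pow_mul]
    exact (hg.pow_right q').mul_left (by rw [← pow_mul, mul_comm, pow_mul]; exact hh.pow_right q)
  inv_mem' := by
    rintro g ⟨q, hq, hg⟩
    exact ⟨q, hq, hg.inv_left⟩

lemma conj_zpow_mul_mem_zpowers {g a : G} {q : ℤ} (h : g * a ^ q * g⁻¹ ∈ zpowers a) (k : ℤ) :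
    g * a ^ (q * k) * g⁻¹ ∈ zpowers a := by
  rw [zpow_mul, ← conj_zpow]
  exact zpow_mem h k

/-- The commensurator of `zpowers a`, described elementwise. -/
def zpowersCommensurator (a : G) : Subgroup G where
  carrier := {g | ∃ q : ℤ, q ≠ 0 ∧ g * a ^ q * g⁻¹ ∈ zpowers a}
  one_mem' := ⟨1, one_ne_zero, by simp⟩
  mul_mem' := by
    rintro g h ⟨q, hq, hg⟩ ⟨q', hq', hh⟩
    obtain ⟨r', hr'⟩ := mem_zpowers_iff.1 hh
    refine ⟨q' * q, mul_ne_zero hq' hq, ?_⟩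
    have hconj : g * h * a ^ (q' * q) * (g * h)⁻¹ = g * a ^ (q * r') * g⁻¹ := by
      rw [mul_comm q r', zpow_mul, zpow_mul, hr', conj_zpow]
      group
    rw [hconj]
    exact conj_zpow_mul_mem_zpowers hg r'
  inv_mem' := by
    rintro g ⟨q, hq, hg⟩
    obtain ⟨r, hr⟩ := mem_zpowers_iff.1 hg
    rcases eq_or_ne r 0 with rfl | hr0
    · refine ⟨q, hq, ?_⟩
      rw [zpow_zero, eq_comm, conj_eq_one_iff] at hr
      simp [hr]
    · refine ⟨r, hr0, ?_⟩
      have hconj : g⁻¹ * a ^ r * g = a ^ q := by rw [hr]; group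
      rw [inv_inv, hconj]
      exact zpow_mem_zpowers a q

lemma self_mem_zpowersCommensurator (a : G) : a ∈ zpowersCommensurator a :=
  ⟨1, one_ne_zero, by simp⟩

lemma inv_conj_mem_virtualCentralizer {a w : G} (hw : w ∈ zpowersCommensurator a) :
    w⁻¹ * a * w ∈ virtualCentralizer a := by
  obtain ⟨q, hq, hw⟩ := hw
  obtain ⟨r, hr⟩ := mem_zpowers_iff.1 hw
  have hcomm : Commute (w⁻¹ * a * w) (a ^ q) := by
    have := ((Commute.refl a).zpow_right r).map (MulAut.conj w⁻¹)
    simpa [hr, mul_assoc] using this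
  refine ⟨q.natAbs, Int.natAbs_pos.2 hq, ?_⟩
  rw [← zpow_natCast, ← Int.sign_mul_self_eq_natAbs, mul_comm, zpow_mul]
  exact hcomm.zpow_right _

lemma normalClosure_singleton_le_virtualCentralizer {a : G} (h : zpowersCommensurator a = ⊤) :
    normalClosure {a} ≤ virtualCentralizer a := by
  refine closure_le _ |>.2 fun c hc => ?_
  obtain ⟨_, rfl, hconj⟩ := Group.mem_conjugatesOfSet_iff.1 hc
  obtain ⟨w, rfl⟩ := isConj_iff.1 hconj
  simpa using inv_conj_mem_virtualCentralizer (h ▸ mem_top w⁻¹ : w⁻¹ ∈ zpowersCommensurator _)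

end Subgroup

namespace BS

lemma inv_t_mul_x_zpow_mul_t (m n : ℤ) : (t m n)⁻¹ * x m n ^ m * t m n = x m n ^ n := by
  have h : PresentedGroup.mk (bsRel m n)
      ((FreeGroup.of false)⁻¹ * (FreeGroup.of true) ^ m * FreeGroup.of false *
        ((FreeGroup.of true) ^ n)⁻¹) = 1 :=
    (QuotientGroup.eq_one_iff _).2 (Subgroup.subset_normalClosure rfl)
  simp only [map_mul, map_inv, map_zpow] at h
  exact mul_inv_eq_one.1 h

lemma zpowersCommensurator_x_eq_top {m n : ℤ} (hm : m ≠ 0) :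
    Subgroup.zpowersCommensurator (x m n) = ⊤ := by
  rw [eq_top_iff, ← PresentedGroup.closure_range_of, Subgroup.closure_le]
  rintro _ ⟨_ | _, rfl⟩
  · refine (Subgroup.inv_mem_iff _).1 ⟨m, hm, ?_⟩
    change (t m n)⁻¹ * x m n ^ m * (t m n)⁻¹⁻¹ ∈ _
    rw [inv_inv, inv_t_mul_x_zpow_mul_t]
    exact Subgroup.zpow_mem_zpowers _ n
  · exact Subgroup.self_mem_zpowersCommensurator _

end BS

theorem normalClosure_x_commutes_with_power_general
    (m n : ℤ) (hm : m ≠ 0) :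
    ∀ g ∈ Subgroup.normalClosure ({BS.x m n} : Set (BS m n)),
      ∃ q : ℕ, 0 < q ∧ g * (BS.x m n) ^ q * g⁻¹ = (BS.x m n) ^ q := by
  intro g hg
  obtain ⟨q, hq, hcomm⟩ :=
    Subgroup.normalClosure_singleton_le_virtualCentralizer (BS.zpowersCommensurator_x_eq_top hm) hg
  exact ⟨q, hq, hcomm.mul_inv_cancel⟩

theorem normalClosure_x_commutes_with_power
    (m n : ℤ) (hm : m ≠ 0) (hn : n ≠ 0) :
    ∀ g ∈ Subgroup.normalClosure ({BS.x m n} : Set (BS m n)),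
      ∃ q : ℕ, 0 < q ∧ g * (BS.x m n) ^ q * g⁻¹ = (BS.x m n) ^ q :=
  normalClosure_x_commutes_with_power_general m n hm
end

section
/- Let m and n be nonzero coprime integers with |m| ≠ |n| and let BS(m,n) = ⟨x, t ∣ t⁻¹ xᵐ t = xⁿ⟩. Let H denote the normal closure of x in BS(m,n), and let N be a normal subgroup of BS(m,n) with N ≤ H such that the subgroup generated by N together with x has finite index in H. Then there exists a positive integer q such that x^q ∈ N. -/
/-!
Pass to `BS(m,n) ⧸ N`. If no positive power of `x` lies in `N`, the image of `x` has infinite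
order and `C = ⟨x⟩` has finite index in the normal closure `H` of `x`. Conjugation by `t`
preserves `H`, so `C ∩ tCt⁻¹` and `C ∩ t⁻¹Ct` have the same index in `C`; being subgroups of
`C ≅ ℤ`, they are equal. Conjugation by `t` therefore restricts to an automorphism of this
cyclic group, i.e. acts on it as `±1`, and `t xⁿ t⁻¹ = xᵐ` forces `m = ±n`.
-/

open scoped Pointwise

theorem Int.addSubgroup_eq_of_index_eq {A B : AddSubgroup ℤ} (h : A.index = B.index) : A = B := by
  obtain ⟨a, rfl⟩ := Int.subgroup_cyclic A
  obtain ⟨b, rfl⟩ := Int.subgroup_cyclic B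
  rw [← AddSubgroup.zmultiples_eq_closure, ← AddSubgroup.zmultiples_eq_closure] at h ⊢
  rw [Int.index_zmultiples, Int.index_zmultiples] at h
  rw [← Int.zmultiples_natAbs a, ← Int.zmultiples_natAbs b, h]

namespace Subgroup

variable {G : Type*} [Group G]

-- Both indices are computed from `[H : C ∩ a • C]`, using `[H : a • C] = [H : C]`.
theorem relIndex_smul_eq_relIndex_inv_smul {H C : Subgroup G} (a : MulAut G) (ha : a • H = H)
    (hCH : C ≤ H) (hC : C.relIndex H ≠ 0) :
    (a • C).relIndex C = (a⁻¹ • C).relIndex C := by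
  have haC : (a • C).relIndex H = C.relIndex H := by
    conv_lhs => rw [← ha]
    exact relIndex_pointwise_smul a C H
  have haCH : a • C ≤ H := ha ▸ pointwise_smul_le_pointwise_smul_iff.mpr hCH
  have h₁ := relIndex_inf_mul_relIndex (a • C) C H
  have h₂ := relIndex_inf_mul_relIndex C (a • C) H
  rw [inf_eq_left.mpr hCH] at h₁
  rw [inf_eq_left.mpr haCH, inf_comm, ← h₁, haC] at h₂
  calc (a • C).relIndex C = C.relIndex (a • C) :=
        (Nat.eq_of_mul_eq_mul_right (Nat.pos_of_ne_zero hC) h₂).symm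
    _ = (a⁻¹ • C).relIndex C := by rw [← relIndex_pointwise_smul a⁻¹, inv_smul_smul]

def zpowExponents (a : MulAut G) (x : G) : AddSubgroup ℤ :=
  AddSubgroup.toSubgroup.symm ((a⁻¹ • zpowers x).comap (zpowersHom G x))

theorem mem_zpowExponents {a : MulAut G} {x : G} {u : ℤ} :
    u ∈ zpowExponents a x ↔ a (x ^ u) ∈ zpowers x :=
  mem_inv_pointwise_smul_iff

theorem index_zpowExponents (a : MulAut G) (x : G) :
    (zpowExponents a x).index = (a⁻¹ • zpowers x).relIndex (zpowers x) := by
  rw [zpowExponents, ← AddSubgroup.index_toSubgroup, OrderIso.apply_symm_apply, index_comap,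
    range_zpowersHom]

theorem zpowExponents_inv_eq {H : Subgroup G} {a : MulAut G} (ha : a • H = H) {x : G}
    (hxH : x ∈ H) (hfin : (zpowers x).relIndex H ≠ 0) :
    zpowExponents a⁻¹ x = zpowExponents a x :=
  Int.addSubgroup_eq_of_index_eq <| by
    rw [index_zpowExponents, index_zpowExponents, inv_inv]
    exact relIndex_smul_eq_relIndex_inv_smul a ha (zpowers_le.mpr hxH) hfin

-- If `d` generates the exponent group, `a (x ^ d) = x ^ (d * k)` and `a⁻¹ (x ^ d) = x ^ (d * l)`
-- with `k * l = 1`.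
theorem map_zpow_eq_zpow_or_eq_zpow_neg {a : MulAut G} {x : G} (hx : ¬IsOfFinOrder x)
    (hS : zpowExponents a⁻¹ x = zpowExponents a x) {u : ℤ} (hu : a (x ^ u) ∈ zpowers x) :
    a (x ^ u) = x ^ u ∨ a (x ^ u) = x ^ (-u) := by
  have hinj := injective_zpow_iff_not_isOfFinOrder.mpr hx
  obtain ⟨d, hd⟩ := Int.subgroup_cyclic (zpowExponents a x)
  rw [← AddSubgroup.zmultiples_eq_closure] at hd
  have dvd_iff (b : MulAut G) (hb : zpowExponents b x = zpowExponents a x) (v : ℤ) :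
      b (x ^ v) ∈ zpowers x ↔ d ∣ v := by
    rw [← mem_zpowExponents, hb, hd, Int.mem_zmultiples_iff]
  have map_zpow_mul {b : MulAut G} {v w : ℤ} (h : b (x ^ v) = x ^ w) (j : ℤ) :
      b (x ^ (v * j)) = x ^ (w * j) := by
    rw [zpow_mul, map_zpow, h, zpow_mul]
  obtain ⟨e, he⟩ := mem_zpowers_iff.mp ((dvd_iff a rfl d).mpr dvd_rfl)
  obtain ⟨f, hf⟩ := mem_zpowers_iff.mp ((dvd_iff a⁻¹ hS d).mpr dvd_rfl)
  obtain ⟨k, rfl⟩ : d ∣ e := (dvd_iff a⁻¹ hS e).mp <| by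
    rw [he, MulAut.inv_apply_self]; exact zpow_mem_zpowers x d
  obtain ⟨l, rfl⟩ : d ∣ f := (dvd_iff a rfl f).mp <| by
    rw [hf, MulAut.apply_inv_self]; exact zpow_mem_zpowers x d
  obtain ⟨j, rfl⟩ := (dvd_iff a rfl u).mp hu
  have hdkl : d = d * k * l := hinj <| show x ^ d = x ^ (d * k * l) by
    rw [← map_zpow_mul he.symm l, hf, MulAut.apply_inv_self]
  rw [map_zpow_mul he.symm j]
  rcases eq_or_ne d 0 with rfl | hd0
  · simp
  have hkl : k * l = 1 := mul_left_cancel₀ hd0 (by linarith [hdkl])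
  rcases Int.eq_one_or_neg_one_of_mul_eq_one hkl with rfl | rfl <;> simp

theorem abs_eq_abs_of_conj_zpow_eq_zpow (H : Subgroup G) [H.Normal] {x g : G}
    (hx : ¬IsOfFinOrder x) (hxH : x ∈ H) (hfin : (zpowers x).relIndex H ≠ 0) {m n : ℤ}
    (h : g⁻¹ * x ^ m * g = x ^ n) : |m| = |n| := by
  have hS := zpowExponents_inv_eq (Normal.conj_smul_eq_self g H) hxH hfin
  have hconj : MulAut.conj g (x ^ n) = x ^ m := by rw [MulAut.conj_apply, ← h]; group
  have hinj := injective_zpow_iff_not_isOfFinOrder.mpr hx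
  rcases map_zpow_eq_zpow_or_eq_zpow_neg hx hS (hconj ▸ zpow_mem_zpowers x m) with h' | h' <;>
    rw [hconj] at h'
  · rw [hinj h']
  · rw [hinj h', abs_neg]

end Subgroup

open Subgroup

theorem QuotientGroup.relIndex_zpowers_mk_normalClosure {G : Type*} [Group G] (N : Subgroup G)
    [N.Normal] (x : G) :
    (zpowers (x : G ⧸ N)).relIndex (normalClosure {(x : G ⧸ N)}) =
      (N ⊔ closure {x}).relIndex (normalClosure {x}) := by
  have hmap : (normalClosure {x}).map (mk' N) = normalClosure {(x : G ⧸ N)} := by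
    rw [map_normalClosure _ _ (mk'_surjective N), Set.image_singleton]; rfl
  have hcomap : (zpowers (x : G ⧸ N)).comap (mk' N) = N ⊔ closure {x} := by
    rw [← zpowers_eq_closure, ← mk'_apply, ← MonoidHom.map_zpowers, comap_map_eq, ker_mk',
      sup_comm]
  rw [← hcomap, relIndex_comap, hmap]

theorem BS.t_inv_mul_x_zpow_mul_t_s6 (m n : ℤ) :
    (BS.t m n)⁻¹ * BS.x m n ^ m * BS.t m n = BS.x m n ^ n := by
  rw [← mul_inv_eq_one]
  exact PresentedGroup.one_of_mem (Set.mem_singleton _)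

theorem power_of_x_mem_of_finite_relindex_general
    (m n : ℤ) (hmn : |m| ≠ |n|)
    (N : Subgroup (BS m n)) (hN : N.Normal)
    (hfin : (N ⊔ Subgroup.closure ({BS.x m n} : Set (BS m n))).relIndex
        (Subgroup.normalClosure ({BS.x m n} : Set (BS m n))) ≠ 0) :
    ∃ q : ℕ, 0 < q ∧ (BS.x m n) ^ q ∈ N := by
  by_contra! hx
  have hX : ¬IsOfFinOrder (BS.x m n : BS m n ⧸ N) := by
    rw [isOfFinOrder_iff_pow_eq_one]
    rintro ⟨q, hq, hxq⟩
    exact hx q hq ((QuotientGroup.eq_one_iff _).mp (mod_cast hxq))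
  refine hmn (abs_eq_abs_of_conj_zpow_eq_zpow (normalClosure {(BS.x m n : BS m n ⧸ N)}) hX
    (subset_normalClosure rfl) ?_ (g := (BS.t m n : BS m n ⧸ N)) ?_)
  · rwa [QuotientGroup.relIndex_zpowers_mk_normalClosure]
  · exact_mod_cast congrArg (QuotientGroup.mk (s := N)) (BS.t_inv_mul_x_zpow_mul_t_s6 m n)

theorem power_of_x_mem_of_finite_relindex
    (m n : ℤ) (hm : m ≠ 0) (hn : n ≠ 0) (hco : IsCoprime m n) (hmn : |m| ≠ |n|)
    (N : Subgroup (BS m n)) (hN : N.Normal)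
    (hle : N ≤ Subgroup.normalClosure ({BS.x m n} : Set (BS m n)))
    (hfin : (N ⊔ Subgroup.closure ({BS.x m n} : Set (BS m n))).relIndex
        (Subgroup.normalClosure ({BS.x m n} : Set (BS m n))) ≠ 0) :
    ∃ q : ℕ, 0 < q ∧ (BS.x m n) ^ q ∈ N :=
  power_of_x_mem_of_finite_relindex_general m n hmn N hN hfin
end

section
/- Let m and n be nonzero integers and let BS(m,n) = ⟨x, t ∣ t⁻¹ xᵐ t = xⁿ⟩, and let H denote the normal closure of x in BS(m,n). Let N be a normal subgroup of BS(m,n) with N ≤ H, and suppose there exist finitely many elements a₁, …, a_s of BS(m,n) such that every element g of BS(m,n) can be written as g = n₀ t^p a_j x^k for some n₀ ∈ N, integers p and k, and some j ∈ {1, …, s}. Then the subgroup generated by N together with x has finite index in H. -/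
/-!
Every `h` in the normal closure `H` of `x` has `t`-exponent sum `0`, so in a decomposition
`h = n₀ tᵖ a_j xᵏ` the exponent `p` is determined by `a_j`. Hence `h` lies in the left coset
`(tᵖ a_j) K` of `K = N ⊔ ⟨x⟩`, because `N` is normal and contained in `K`. Finitely many cosets
of `K` therefore cover `H`.
-/

theorem Subgroup.relIndex_ne_zero_of_forall_exists_inv_mul_mem {G ι : Type*} [Group G]
    [Finite ι] {K H : Subgroup G} (b : ι → G) (hb : ∀ g ∈ H, ∃ i, (b i)⁻¹ * g ∈ K) :
    K.relIndex H ≠ 0 := by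
  choose c hc using hb
  have : Finite (H ⧸ K.subgroupOf H) := by
    refine Finite.of_injective (fun q : H ⧸ K.subgroupOf H => c q.out q.out.2) fun q q' hqq' => ?_
    rw [← q.out_eq', ← q'.out_eq', QuotientGroup.eq, Subgroup.mem_subgroupOf]
    have := K.mul_mem (K.inv_mem (hc _ q.out.2)) (hc _ q'.out.2)
    simp only at hqq'
    simpa [hqq', mul_assoc] using this
  exact Subgroup.index_ne_zero_of_finite

namespace BS

variable (m n : ℤ)

def tExpSum : BS m n →* Multiplicative ℤ :=
  PresentedGroup.toGroup (f := fun b => if b then 1 else Multiplicative.ofAdd 1) <| by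
    rintro r rfl
    simp only [map_mul, map_inv, map_zpow, FreeGroup.lift_apply_of, if_pos,
      Bool.false_eq_true, if_false]
    group

@[simp]
theorem tExpSum_x : tExpSum m n (x m n) = 1 :=
  PresentedGroup.toGroup.of _

@[simp]
theorem tExpSum_t : tExpSum m n (t m n) = Multiplicative.ofAdd 1 :=
  PresentedGroup.toGroup.of _

variable {m n}

theorem tExpSum_eq_one_of_mem_normalClosure {g : BS m n}
    (hg : g ∈ Subgroup.normalClosure {x m n}) : tExpSum m n g = 1 := by
  refine Subgroup.normalClosure_le_normal (N := (tExpSum m n).ker) ?_ hg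
  simp

end BS

open BS Subgroup in
theorem finite_relindex_of_coset_decomposition_general
    (m n : ℤ)
    (N : Subgroup (BS m n)) (hN : N.Normal)
    (hle : N ≤ Subgroup.normalClosure ({BS.x m n} : Set (BS m n)))
    (s : ℕ) (a : Fin s → BS m n)
    (hcover : ∀ g : BS m n, ∃ n₀ ∈ N, ∃ (p k : ℤ) (j : Fin s),
      g = n₀ * (BS.t m n) ^ p * a j * (BS.x m n) ^ k) :
    (N ⊔ Subgroup.closure ({BS.x m n} : Set (BS m n))).relIndex
      (Subgroup.normalClosure ({BS.x m n} : Set (BS m n))) ≠ 0 := by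
  refine relIndex_ne_zero_of_forall_exists_inv_mul_mem
    (fun j => t m n ^ (-(tExpSum m n (a j)).toAdd) * a j) fun g hg => ?_
  obtain ⟨n₀, hn₀, p, k, j, rfl⟩ := hcover g
  have hp : p = -(tExpSum m n (a j)).toAdd := by
    have h := congrArg Multiplicative.toAdd (tExpSum_eq_one_of_mem_normalClosure hg)
    simp only [map_mul, map_zpow, tExpSum_eq_one_of_mem_normalClosure (hle hn₀), tExpSum_t,
      tExpSum_x, one_mul, one_zpow, mul_one, toAdd_mul, toAdd_zpow, toAdd_ofAdd,
      Int.zsmul_eq_mul, toAdd_one] at h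
    omega
  refine ⟨j, ?_⟩
  set c := t m n ^ p * a j
  have hconj : c⁻¹ * n₀ * c ∈ N := by simpa using hN.conj_mem _ hn₀ c⁻¹
  have hx : x m n ∈ N ⊔ closure {x m n} := mem_sup_right (subset_closure rfl)
  rw [← hp, show c⁻¹ * (n₀ * t m n ^ p * a j * x m n ^ k) = c⁻¹ * n₀ * c * x m n ^ k by
    simp only [c]; group]
  exact mul_mem (mem_sup_left hconj) (zpow_mem hx k)

theorem finite_relindex_of_coset_decomposition
    (m n : ℤ) (hm : m ≠ 0) (hn : n ≠ 0)
    (N : Subgroup (BS m n)) (hN : N.Normal)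
    (hle : N ≤ Subgroup.normalClosure ({BS.x m n} : Set (BS m n)))
    (s : ℕ) (a : Fin s → BS m n)
    (hcover : ∀ g : BS m n, ∃ n₀ ∈ N, ∃ (p k : ℤ) (j : Fin s),
      g = n₀ * (BS.t m n) ^ p * a j * (BS.x m n) ^ k) :
    (N ⊔ Subgroup.closure ({BS.x m n} : Set (BS m n))).relIndex
      (Subgroup.normalClosure ({BS.x m n} : Set (BS m n))) ≠ 0 :=
  finite_relindex_of_coset_decomposition_general m n N hN hle s a hcover
end

section
/- For every group G and every natural number n, the group G is cyclic subgroup separable if and only if the direct product ℤⁿ × G is cyclic subgroup separable. -/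
/-!
Cyclic subgroup separability passes to subgroups, which gives one direction. For the other,
`ℤⁿ⁺¹ × G ≅ ℤ × (ℤⁿ × G)`, so it suffices to treat `ℤ × G`. Let `(b, h) ∉ ⟨(a, c)⟩`. If `b ∉ ⟨a⟩`
or `h ∉ ⟨c⟩`, separate in the factor `ℤ` or `G`. Otherwise `b = a ^ j` and `h = c ^ m` with
`c ^ m ≠ c ^ j`; choose a finite quotient `π` of `G` with `π c ^ m ≠ π c ^ j`. In
`ZMod (d * |a|)`, where `d` is the order of `π c`, the order of `a` is a multiple of `d`, and this
keeps `(a ^ j, π c ^ m)` outside `⟨(a, π c)⟩`.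
-/

/-- A group `G` is cyclic subgroup separable if for every `c ∈ G` and every `h ∈ G`
not lying in the cyclic subgroup `⟨c⟩`, there is a homomorphism `π` to a finite
group with `π h ∉ π(⟨c⟩)`. -/
def CyclicSubgroupSeparable (G : Type*) [Group G] : Prop :=
  ∀ c h : G, h ∉ Subgroup.zpowers c →
    ∃ (Q : Type) (_ : Group Q) (_ : Finite Q) (π : G →* Q),
      π h ∉ (Subgroup.zpowers c).map π

open Subgroup

section Separation

variable {G H : Type*} [Group G] [Group H]

def SeparatedFromZPowers (c h : G) : Prop :=
  ∃ (Q : Type) (_ : Group Q) (_ : Finite Q) (π : G →* Q), π h ∉ zpowers (π c)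

theorem cyclicSubgroupSeparable_iff_separatedFromZPowers :
    CyclicSubgroupSeparable G ↔ ∀ c h : G, h ∉ zpowers c → SeparatedFromZPowers c h := by
  simp only [CyclicSubgroupSeparable, SeparatedFromZPowers, MonoidHom.map_zpowers]

theorem CyclicSubgroupSeparable.separatedFromZPowers_of_map (hH : CyclicSubgroupSeparable H)
    (f : G →* H) {c h : G} (hf : f h ∉ zpowers (f c)) : SeparatedFromZPowers c h := by
  obtain ⟨Q, _, _, π, hπ⟩ := hH _ _ hf
  exact ⟨Q, _, ‹_›, π.comp f, by simpa using hπ⟩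

theorem CyclicSubgroupSeparable.of_injective (hH : CyclicSubgroupSeparable H) (f : G →* H)
    (hf : Function.Injective f) : CyclicSubgroupSeparable G :=
  cyclicSubgroupSeparable_iff_separatedFromZPowers.mpr fun _ _ hh ↦
    hH.separatedFromZPowers_of_map f <| by rwa [← MonoidHom.map_zpowers, mem_map_iff_mem hf]

theorem CyclicSubgroupSeparable.of_mulEquiv (hH : CyclicSubgroupSeparable H) (e : G ≃* H) :
    CyclicSubgroupSeparable G :=
  hH.of_injective e.toMonoidHom e.injective

theorem CyclicSubgroupSeparable.exists_map_ne (hG : CyclicSubgroupSeparable G) {g g' : G}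
    (hg : g ≠ g') : ∃ (Q : Type) (_ : Group Q) (_ : Finite Q) (π : G →* Q), π g ≠ π g' := by
  obtain ⟨Q, _, _, π, hπ⟩ := cyclicSubgroupSeparable_iff_separatedFromZPowers.mp hG 1 (g * g'⁻¹) <|
    by rwa [zpowers_one_eq_bot, mem_bot, mul_inv_eq_one]
  refine ⟨Q, _, ‹_›, π, fun h ↦ hπ ?_⟩
  rw [map_one, zpowers_one_eq_bot, mem_bot, map_mul, map_inv, h, mul_inv_cancel]

end Separation

theorem zpow_eq_zpow_of_mk_zpow_mem_zpowers {A B : Type*} [Group A] [Group B] {x : A} {u : B}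
    (hxu : orderOf u ∣ orderOf x) {j m : ℤ} (h : (x ^ j, u ^ m) ∈ zpowers (x, u)) :
    u ^ m = u ^ j := by
  obtain ⟨k, hk⟩ := mem_zpowers_iff.mp h
  simp only [Prod.pow_mk, Prod.mk.injEq] at hk
  have hkj : u ^ k = u ^ j := zpow_eq_zpow_iff_modEq.mpr <|
    (zpow_eq_zpow_iff_modEq.mp hk.1).of_dvd (Int.natCast_dvd_natCast.mpr hxu)
  rw [← hk.2, hkj]

theorem Int.exists_dvd_not_dvd_of_not_dvd {a b : ℤ} (h : ¬ a ∣ b) :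
    ∃ N : ℕ, N ≠ 0 ∧ (N : ℤ) ∣ a ∧ ¬ (N : ℤ) ∣ b := by
  rcases eq_or_ne a 0 with rfl | ha
  · have hb : b ≠ 0 := by rintro rfl; exact h (dvd_zero 0)
    refine ⟨b.natAbs + 1, by omega, dvd_zero _, fun hdvd ↦ hb ?_⟩
    exact Int.eq_zero_of_dvd_of_natAbs_lt_natAbs hdvd (by omega)
  · exact ⟨a.natAbs, by simpa using ha, Int.natAbs_dvd.mpr dvd_rfl, by rwa [Int.natAbs_dvd]⟩

def castZModHom (N : ℕ) : Multiplicative ℤ →* Multiplicative (ZMod N) :=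
  (Int.castAddHom (ZMod N)).toMultiplicative

theorem castZModHom_eq_one_iff {N : ℕ} {a : Multiplicative ℤ} :
    castZModHom N a = 1 ↔ (N : ℤ) ∣ a.toAdd :=
  ZMod.intCast_zmod_eq_zero_iff_dvd _ _

theorem mem_zpowers_iff_toAdd_dvd {a b : Multiplicative ℤ} :
    b ∈ zpowers a ↔ a.toAdd ∣ b.toAdd :=
  Int.mem_zmultiples_iff

theorem dvd_orderOf_castZModHom (d : ℕ) {a : Multiplicative ℤ} (ha : a ≠ 1) :
    d ∣ orderOf (castZModHom (d * a.toAdd.natAbs) a) := by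
  set o := orderOf (castZModHom (d * a.toAdd.natAbs) a)
  have h : castZModHom (d * a.toAdd.natAbs) (a ^ o) = 1 := by rw [map_pow, pow_orderOf_eq_one]
  rw [castZModHom_eq_one_iff, toAdd_pow, nsmul_eq_mul, ← Int.natAbs_dvd_natAbs,
    Int.natAbs_mul, Int.natAbs_natCast, Int.natAbs_natCast] at h
  exact Nat.dvd_of_mul_dvd_mul_right (by simpa using ha) h

theorem cyclicSubgroupSeparable_multiplicative_int :
    CyclicSubgroupSeparable (Multiplicative ℤ) := by
  refine cyclicSubgroupSeparable_iff_separatedFromZPowers.mpr fun a b hab ↦ ?_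
  obtain ⟨N, hN, hNa, hNb⟩ :=
    Int.exists_dvd_not_dvd_of_not_dvd (mem_zpowers_iff_toAdd_dvd.not.mp hab)
  have : NeZero N := ⟨hN⟩
  refine ⟨Multiplicative (ZMod N), _, inferInstance, castZModHom N, ?_⟩
  rwa [castZModHom_eq_one_iff.mpr hNa, zpowers_one_eq_bot, mem_bot, castZModHom_eq_one_iff]

namespace CyclicSubgroupSeparable

variable {G : Type*} [Group G]

theorem separatedFromZPowers_int_prod (hG : CyclicSubgroupSeparable G) {a : Multiplicative ℤ}
    {c : G} {j m : ℤ} (hjm : (a ^ j, c ^ m) ∉ zpowers (a, c)) :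
    SeparatedFromZPowers (a, c) (a ^ j, c ^ m) := by
  have ha : a ≠ 1 := by
    rintro rfl
    exact hjm ⟨m, by simp⟩
  have hc : c ^ m ≠ c ^ j := fun h ↦ hjm ⟨j, by simp [h]⟩
  obtain ⟨Q, _, _, π, hπ⟩ := hG.exists_map_ne hc
  set N := orderOf (π c) * a.toAdd.natAbs
  have : NeZero N := ⟨mul_ne_zero (orderOf_pos (π c)).ne' (by simpa using ha)⟩
  refine ⟨Multiplicative (ZMod N) × Q, _, inferInstance, (castZModHom N).prodMap π, fun hmem ↦ ?_⟩
  simp only [MonoidHom.coe_prodMap, Prod.map, map_zpow] at hmem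
  exact hπ <| by
    simpa using zpow_eq_zpow_of_mk_zpow_mem_zpowers (dvd_orderOf_castZModHom _ ha) hmem

theorem multiplicative_int_prod (hG : CyclicSubgroupSeparable G) :
    CyclicSubgroupSeparable (Multiplicative ℤ × G) := by
  refine cyclicSubgroupSeparable_iff_separatedFromZPowers.mpr ?_
  rintro ⟨a, c⟩ ⟨b, h⟩ hmem
  by_cases hh : h ∈ zpowers c
  swap
  · exact hG.separatedFromZPowers_of_map (MonoidHom.snd _ _) hh
  obtain ⟨m, rfl⟩ := mem_zpowers_iff.mp hh
  by_cases hb : b ∈ zpowers a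
  · obtain ⟨j, rfl⟩ := mem_zpowers_iff.mp hb
    exact hG.separatedFromZPowers_int_prod hmem
  · exact cyclicSubgroupSeparable_multiplicative_int.separatedFromZPowers_of_map
      (MonoidHom.fst _ _) hb

end CyclicSubgroupSeparable

def MulEquiv.piFinSucc (M : Type*) [Mul M] (n : ℕ) : (Fin (n + 1) → M) ≃* M × (Fin n → M) :=
  { (Fin.consEquiv fun _ ↦ M).symm with map_mul' := fun _ _ ↦ rfl }

theorem CyclicSubgroupSeparable.pi_int_prod {G : Type*} [Group G]
    (hG : CyclicSubgroupSeparable G) :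
    ∀ n : ℕ, CyclicSubgroupSeparable ((Fin n → Multiplicative ℤ) × G)
  | 0 => hG.of_mulEquiv MulEquiv.uniqueProd
  | n + 1 =>
    (hG.pi_int_prod n).multiplicative_int_prod.of_mulEquiv <|
      ((MulEquiv.piFinSucc _ n).prodCongr (MulEquiv.refl G)).trans MulEquiv.prodAssoc

theorem cyclicSubgroupSeparable_iff_zn_prod
    (G : Type) [Group G] (n : ℕ) :
    CyclicSubgroupSeparable G ↔
      CyclicSubgroupSeparable ((Fin n → Multiplicative ℤ) × G) :=
  ⟨fun hG ↦ hG.pi_int_prod n,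
    fun h ↦ h.of_injective (MonoidHom.inr _ _) (Prod.mk_right_injective 1)⟩
end

section
/- Let S be a subdirect product of G₁ × G₂, set L₁ = S ∩ (G₁ × {1}) and L₂ = S ∩ ({1} × G₂) (identified with subgroups of G₁ and G₂), and suppose the quotient S/(L₁ × L₂) is virtually infinite cyclic. Then there exists a finite-index subgroup H of S containing L₁ × L₂ such that, setting H₁ = p₁(H) ≤ G₁ and H₂ = p₂(H) ≤ G₂ (where p_i are the coordinate projections), the subgroups H₁ and H₂ have finite index in G₁ and G₂ respectively, H is a normal subgroup of H₁ × H₂, and the quotient (H₁ × H₂)/H is isomorphic to ℤ. -/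
/-- A subgroup `S` of `G₁ × G₂` is a subdirect product if both coordinate
projections map `S` onto `G₁` and onto `G₂`. -/
def IsSubdirect {G₁ G₂ : Type*} [Group G₁] [Group G₂] (S : Subgroup (G₁ × G₂)) : Prop :=
  S.map (MonoidHom.fst G₁ G₂) = ⊤ ∧ S.map (MonoidHom.snd G₁ G₂) = ⊤

/-- `L₁ = S ∩ (G₁ × {1})`, identified with a subgroup of `G₁`. -/
def leftFiber {G₁ G₂ : Type*} [Group G₁] [Group G₂] (S : Subgroup (G₁ × G₂)) : Subgroup G₁ :=
  S.comap (MonoidHom.inl G₁ G₂)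

/-- `L₂ = S ∩ ({1} × G₂)`, identified with a subgroup of `G₂`. -/
def rightFiber {G₁ G₂ : Type*} [Group G₁] [Group G₂] (S : Subgroup (G₁ × G₂)) : Subgroup G₂ :=
  S.comap (MonoidHom.inr G₁ G₂)

/-!
Write `Q = S ⧸ (L₁ × L₂)`. The kernel of `p₁ : S → G₁` is `S ∩ ({1} × G₂) ≤ L₁ × L₂`, so the
quotient map `S → Q` factors through `p₁` as a surjection `χ₁ : G₁ → Q`, and likewise
`χ₂ : G₂ → Q`; moreover `S` is exactly the fibre product `{(x, y) | χ₁ x = χ₂ y}`. Given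
`C ≤ Q` of finite index with `e : C ≅ ℤ`, let `H` be the preimage of `C` in `S` and
`Hᵢ = χᵢ⁻¹ C`. The image of `H` in `G₁ × G₂` is then the kernel of the surjective character
`(x, y) ↦ e (χ₁ x) - e (χ₂ y)` on `H₁ × H₂`.
-/

open Function MonoidHom

lemma Subgroup.finiteIndex_comap_of_surjective {G G' : Type*} [Group G] [Group G']
    {f : G' →* G} (hf : Surjective f) (H : Subgroup G) [H.FiniteIndex] :
    (H.comap f).FiniteIndex :=
  ⟨by rw [H.index_comap_of_surjective hf]; exact Subgroup.FiniteIndex.index_ne_zero⟩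

namespace MonoidHom

variable {G₁ G₂ Q : Type*} [Group G₁] [Group G₂] [Group Q]

def fiberProduct (χ₁ : G₁ →* Q) (χ₂ : G₂ →* Q) : Subgroup (G₁ × G₂) :=
  (χ₁.comp (fst G₁ G₂)).eqLocus (χ₂.comp (snd G₁ G₂))

variable {χ₁ : G₁ →* Q} {χ₂ : G₂ →* Q}

@[simp]
lemma mem_fiberProduct {z : G₁ × G₂} :
    z ∈ fiberProduct χ₁ χ₂ ↔ χ₁ z.1 = χ₂ z.2 :=
  Iff.rfl

variable (C : Subgroup Q)

lemma map_fst_fiberProduct_inf_prod (h₂ : Surjective χ₂) :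
    (fiberProduct χ₁ χ₂ ⊓ (C.comap χ₁).prod (C.comap χ₂)).map (fst G₁ G₂) = C.comap χ₁ := by
  ext x
  constructor
  · rintro ⟨z, ⟨-, hz⟩, rfl⟩
    exact (Subgroup.mem_prod.mp hz).1
  · intro hx
    obtain ⟨y, hy⟩ := h₂ (χ₁ x)
    exact ⟨(x, y), ⟨hy.symm, Subgroup.mem_prod.mpr ⟨hx, show χ₂ y ∈ C from hy ▸ hx⟩⟩, rfl⟩

lemma map_snd_fiberProduct_inf_prod (h₁ : Surjective χ₁) :
    (fiberProduct χ₁ χ₂ ⊓ (C.comap χ₁).prod (C.comap χ₂)).map (snd G₁ G₂) = C.comap χ₂ := by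
  ext y
  constructor
  · rintro ⟨z, ⟨-, hz⟩, rfl⟩
    exact (Subgroup.mem_prod.mp hz).2
  · intro hy
    obtain ⟨x, hx⟩ := h₁ (χ₂ y)
    exact ⟨(x, y), ⟨hx, Subgroup.mem_prod.mpr ⟨show χ₁ x ∈ C from hx ▸ hy, hy⟩⟩, rfl⟩

variable {A : Type*} [CommGroup A] (e : C ≃* A)

def fiberProductCharacter : (C.comap χ₁).prod (C.comap χ₂) →* A :=
  divMonoidHom.comp <|
    ((e.toMonoidHom.comp (χ₁.subgroupComap C)).prodMap
      (e.toMonoidHom.comp (χ₂.subgroupComap C))).comp (Subgroup.prodEquiv _ _).toMonoidHom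

lemma fiberProductCharacter_apply (z : (C.comap χ₁).prod (C.comap χ₂)) :
    fiberProductCharacter C e z =
      e ⟨χ₁ (z : G₁ × G₂).1, (Subgroup.mem_prod.mp z.2).1⟩ /
        e ⟨χ₂ (z : G₁ × G₂).2, (Subgroup.mem_prod.mp z.2).2⟩ :=
  rfl

lemma ker_fiberProductCharacter :
    (fiberProductCharacter C e).ker =
      (fiberProduct χ₁ χ₂).subgroupOf ((C.comap χ₁).prod (C.comap χ₂)) := by
  ext z
  simp [fiberProductCharacter_apply, Subgroup.mem_subgroupOf, div_eq_one, Subtype.ext_iff]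

lemma fiberProductCharacter_surjective (h₁ : Surjective χ₁) :
    Surjective (fiberProductCharacter C e : (C.comap χ₁).prod (C.comap χ₂) →* A) := by
  intro a
  obtain ⟨x, hx⟩ := h₁ (e.symm a)
  have hz : (x, (1 : G₂)) ∈ (C.comap χ₁).prod (C.comap χ₂) :=
    Subgroup.mem_prod.mpr ⟨by simp [Subgroup.mem_comap, hx], one_mem _⟩
  refine ⟨⟨_, hz⟩, ?_⟩
  simp [fiberProductCharacter_apply, hx]

end MonoidHom

section Fibers

variable {G₁ G₂ : Type*} [Group G₁] [Group G₂] {S : Subgroup (G₁ × G₂)}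

abbrev fibersProd (S : Subgroup (G₁ × G₂)) : Subgroup S :=
  ((leftFiber S).prod (rightFiber S)).subgroupOf S

lemma mem_fibersProd {s : S} :
    s ∈ fibersProd S ↔ ((s : G₁ × G₂).1, (1 : G₂)) ∈ S ∧ ((1 : G₁), (s : G₁ × G₂).2) ∈ S := by
  simp [Subgroup.mem_subgroupOf, Subgroup.mem_prod, leftFiber, rightFiber]

lemma ker_fst_comp_subtype_le_fibersProd :
    ((fst G₁ G₂).comp S.subtype).ker ≤ fibersProd S := by
  rintro ⟨⟨x, y⟩, hs⟩ (rfl : x = 1)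
  exact mem_fibersProd.mpr ⟨one_mem S, hs⟩

lemma ker_snd_comp_subtype_le_fibersProd :
    ((snd G₁ G₂).comp S.subtype).ker ≤ fibersProd S := by
  rintro ⟨⟨x, y⟩, hs⟩ (rfl : y = 1)
  exact mem_fibersProd.mpr ⟨hs, one_mem S⟩

end Fibers

namespace IsSubdirect

variable {G₁ G₂ : Type*} [Group G₁] [Group G₂] {S : Subgroup (G₁ × G₂)}

lemma surjective_fst (hS : IsSubdirect S) : Surjective ((fst G₁ G₂).comp S.subtype) := by
  intro x
  obtain ⟨z, hz, rfl⟩ : x ∈ S.map (fst G₁ G₂) := hS.1 ▸ Subgroup.mem_top x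
  exact ⟨⟨z, hz⟩, rfl⟩

lemma surjective_snd (hS : IsSubdirect S) : Surjective ((snd G₁ G₂).comp S.subtype) := by
  intro y
  obtain ⟨z, hz, rfl⟩ : y ∈ S.map (snd G₁ G₂) := hS.2 ▸ Subgroup.mem_top y
  exact ⟨⟨z, hz⟩, rfl⟩

variable (hS : IsSubdirect S) [(fibersProd S).Normal]

noncomputable def leftQuotientMap : G₁ →* S ⧸ fibersProd S :=
  ((fst G₁ G₂).comp S.subtype).liftOfRightInverse (surjInv hS.surjective_fst)
    (rightInverse_surjInv _)
    ⟨QuotientGroup.mk' _, by simpa using ker_fst_comp_subtype_le_fibersProd⟩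

noncomputable def rightQuotientMap : G₂ →* S ⧸ fibersProd S :=
  ((snd G₁ G₂).comp S.subtype).liftOfRightInverse (surjInv hS.surjective_snd)
    (rightInverse_surjInv _)
    ⟨QuotientGroup.mk' _, by simpa using ker_snd_comp_subtype_le_fibersProd⟩

@[simp]
lemma leftQuotientMap_fst (s : S) :
    hS.leftQuotientMap (s : G₁ × G₂).1 = (s : S ⧸ fibersProd S) :=
  liftOfRightInverse_comp_apply _ _ _ _ s

@[simp]
lemma rightQuotientMap_snd (s : S) :
    hS.rightQuotientMap (s : G₁ × G₂).2 = (s : S ⧸ fibersProd S) :=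
  liftOfRightInverse_comp_apply _ _ _ _ s

lemma leftQuotientMap_surjective : Surjective hS.leftQuotientMap := by
  rintro ⟨s⟩
  exact ⟨_, hS.leftQuotientMap_fst s⟩

lemma rightQuotientMap_surjective : Surjective hS.rightQuotientMap := by
  rintro ⟨s⟩
  exact ⟨_, hS.rightQuotientMap_snd s⟩

lemma eq_fiberProduct : S = fiberProduct hS.leftQuotientMap hS.rightQuotientMap := by
  ext ⟨x, y⟩
  constructor
  · intro hxy
    exact (hS.leftQuotientMap_fst ⟨_, hxy⟩).trans (hS.rightQuotientMap_snd ⟨_, hxy⟩).symm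
  · intro h
    obtain ⟨s, rfl⟩ := hS.surjective_fst x
    obtain ⟨t, rfl⟩ := hS.surjective_snd y
    -- `s⁻¹ t ∈ L₁ × L₂` puts `(1, s₂⁻¹ t₂)` in `S`, and `s * (1, s₂⁻¹ t₂) = (s₁, t₂)`.
    have hst : s⁻¹ * t ∈ fibersProd S := by
      rw [← QuotientGroup.eq, ← hS.leftQuotientMap_fst, ← hS.rightQuotientMap_snd]
      exact h
    convert S.mul_mem s.2 (mem_fibersProd.mp hst).2 using 1
    ext <;> simp

lemma map_subtype_comap_mk (C : Subgroup (S ⧸ fibersProd S)) :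
    (C.comap (QuotientGroup.mk' _)).map S.subtype =
      fiberProduct hS.leftQuotientMap hS.rightQuotientMap ⊓
        (C.comap hS.leftQuotientMap).prod (C.comap hS.rightQuotientMap) := by
  ext z
  constructor
  · rintro ⟨s, hs, rfl⟩
    refine ⟨hS.eq_fiberProduct ▸ s.2, Subgroup.mem_prod.mpr ⟨?_, ?_⟩⟩ <;> simpa using hs
  · rintro ⟨hz, hzC⟩
    refine ⟨⟨z, hS.eq_fiberProduct ▸ hz⟩, ?_, rfl⟩
    show QuotientGroup.mk' _ _ ∈ C
    rw [QuotientGroup.mk'_apply, ← hS.leftQuotientMap_fst]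
    exact (Subgroup.mem_prod.mp hzC).1

end IsSubdirect

theorem virtually_kernel_of_virtually_Z_quotient
    {G₁ G₂ : Type} [Group G₁] [Group G₂]
    (S : Subgroup (G₁ × G₂)) (hsub : IsSubdirect S)
    [hnorm : (((leftFiber S).prod (rightFiber S)).subgroupOf S).Normal]
    (hvz : ∃ C : Subgroup (S ⧸ ((leftFiber S).prod (rightFiber S)).subgroupOf S),
      C.FiniteIndex ∧ Nonempty (C ≃* Multiplicative ℤ)) :
    ∃ (H : Subgroup S) (H₁ : Subgroup G₁) (H₂ : Subgroup G₂),
      H₁ = (H.map S.subtype).map (MonoidHom.fst G₁ G₂) ∧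
      H₂ = (H.map S.subtype).map (MonoidHom.snd G₁ G₂) ∧
      H.FiniteIndex ∧
      ((leftFiber S).prod (rightFiber S)).subgroupOf S ≤ H ∧
      H₁.FiniteIndex ∧ H₂.FiniteIndex ∧
      ((H.map S.subtype).subgroupOf (H₁.prod H₂)).Normal ∧
      ∀ (_ : ((H.map S.subtype).subgroupOf (H₁.prod H₂)).Normal),
        Nonempty (((H₁.prod H₂) ⧸ (H.map S.subtype).subgroupOf (H₁.prod H₂)) ≃*
          Multiplicative ℤ) := by
  obtain ⟨C, hC, ⟨e⟩⟩ := hvz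
  have hH := hsub.map_subtype_comap_mk C
  have hker : (fiberProductCharacter C e).ker =
      ((C.comap (QuotientGroup.mk' _)).map S.subtype).subgroupOf
        ((C.comap hsub.leftQuotientMap).prod (C.comap hsub.rightQuotientMap)) := by
    rw [hH, Subgroup.inf_subgroupOf_right, ker_fiberProductCharacter]
  refine ⟨C.comap (QuotientGroup.mk' _), C.comap hsub.leftQuotientMap,
    C.comap hsub.rightQuotientMap, ?_, ?_, ?_, ?_, ?_, ?_, hker ▸ normal_ker _, fun _ => ?_⟩
  · rw [hH, map_fst_fiberProduct_inf_prod C hsub.rightQuotientMap_surjective]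
  · rw [hH, map_snd_fiberProduct_inf_prod C hsub.leftQuotientMap_surjective]
  · exact C.finiteIndex_comap_of_surjective (QuotientGroup.mk'_surjective _)
  · exact (QuotientGroup.ker_mk' _).symm.trans_le (ker_le_comap _ C)
  · exact C.finiteIndex_comap_of_surjective hsub.leftQuotientMap_surjective
  · exact C.finiteIndex_comap_of_surjective hsub.rightQuotientMap_surjective
  · exact ⟨(QuotientGroup.quotientMulEquivOfEq hker.symm).trans
      (QuotientGroup.quotientKerEquivOfSurjective _
        (fiberProductCharacter_surjective C e hsub.leftQuotientMap_surjective))⟩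
end
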